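/- The unfolding translation ⌊·⌋ from Λ-terms to λ-terms maps each B-step of λsub to an equality and each sub-step (Gc or R) to a non-empty λpar-reduction sequence: if t →_B t' then ⌊t⌋ = ⌊t'⌋, and if t →_{sub} t' then ⌊t⌋ →⁺_{λpar} ⌊t'⌋. -/

import Mathlib

/-! # Λ-terms with explicit substitutions (λsub calculus) -/

inductive Tm : Type
  | var : ℕ → Tm
  | app : Tm → Tm → Tm
  | lam : ℕ → Tm → Tm
  | esub : ℕ → Tm → Tm → Tm   -- esub x t u  is  t[x/u]
  deriving DecidableEq

namespace Tm

/-- free variables -/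
def fv : Tm → Finset ℕ
  | var x => {x}
  | app t u => fv t ∪ fv u
  | lam x t => fv t \ {x}
  | esub x t u => (fv t \ {x}) ∪ fv u

/-- implicit (capture-avoiding, under the bound-variable convention) substitution -/
def subst (x : ℕ) (v : Tm) : Tm → Tm
  | var y => if y = x then v else var y
  | app t u => app (subst x v t) (subst x v u)
  | lam y t => lam y (subst x v t)
  | esub y t u => esub y (subst x v t) (subst x v u)

/-- `Repl x u t t'` : `t'` is obtained from `t` by replacing exactly one free
occurrence of `x` by `u`, without capture of `x` or the free variables of `u`. -/
inductive Repl (x : ℕ) (u : Tm) : Tm → Tm → Prop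
  | var : Repl x u (var x) u
  | appL {t t' s} : Repl x u t t' → Repl x u (app t s) (app t' s)
  | appR {t s s'} : Repl x u s s' → Repl x u (app t s) (app t s')
  | lam {y t t'} : y ≠ x → y ∉ fv u → Repl x u t t' → Repl x u (lam y t) (lam y t')
  | esubL {y t t' s} : y ≠ x → y ∉ fv u → Repl x u t t' → Repl x u (esub y t s) (esub y t' s)
  | esubR {y t s s'} : Repl x u s s' → Repl x u (esub y t s) (esub y t s')

/-- root reduction rules of λsub: B, Gc, R -/
inductive LsubRoot : Tm → Tm → Prop
  | B {x t u} : LsubRoot (app (lam x t) u) (esub x t u)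
  | Gc {x t u} : x ∉ fv t → LsubRoot (esub x t u) t
  | R {x t t' u} : Repl x u t t' → LsubRoot (esub x t u) (esub x t' u)

/-- root rules of the substitution subcalculus: Gc, R -/
inductive SubRoot : Tm → Tm → Prop
  | Gc {x t u} : x ∉ fv t → SubRoot (esub x t u) t
  | R {x t t' u} : Repl x u t t' → SubRoot (esub x t u) (esub x t' u)

/-- root rule B only -/
inductive BRoot : Tm → Tm → Prop
  | B {x t u} : BRoot (app (lam x t) u) (esub x t u)

/-- root β-rule (full implicit substitution) -/
inductive BetaRoot : Tm → Tm → Prop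
  | beta {x t u} : BetaRoot (app (lam x t) u) (subst x u t)

/-- root rules of the partial λpar-calculus: β_p and BGc -/
inductive LparRoot : Tm → Tm → Prop
  | betaP {x t t' u} : Repl x u t t' → LparRoot (app (lam x t) u) (app (lam x t') u)
  | BGc {x t u} : x ∉ fv t → LparRoot (app (lam x t) u) t

/-- closure of a root relation under all contexts -/
inductive Ctx (r : Tm → Tm → Prop) : Tm → Tm → Prop
  | root {t t'} : r t t' → Ctx r t t'
  | appL {t t' s} : Ctx r t t' → Ctx r (app t s) (app t' s)
  | appR {t s s'} : Ctx r s s' → Ctx r (app t s) (app t s')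
  | lam {y t t'} : Ctx r t t' → Ctx r (lam y t) (lam y t')
  | esubL {y t t' s} : Ctx r t t' → Ctx r (esub y t s) (esub y t' s)
  | esubR {y t s s'} : Ctx r s s' → Ctx r (esub y t s) (esub y t s')

def LsubStep : Tm → Tm → Prop := Ctx LsubRoot
def SubStep : Tm → Tm → Prop := Ctx SubRoot
def BStep : Tm → Tm → Prop := Ctx BRoot
def BetaStep : Tm → Tm → Prop := Ctx BetaRoot
def LparStep : Tm → Tm → Prop := Ctx LparRoot
/-- λdef: λsub rules together with full β -/
def LdefStep : Tm → Tm → Prop := Ctx (fun a b => LsubRoot a b ∨ BetaRoot a b)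

/-- pure λ-terms: no explicit substitution -/
def IsPure : Tm → Prop
  | var _ => True
  | app t u => IsPure t ∧ IsPure u
  | lam _ t => IsPure t
  | esub _ _ _ => False

/-- strong normalisation of `t` for the relation `r` -/
def SN (r : Tm → Tm → Prop) (t : Tm) : Prop := Acc (fun a b => r b a) t

/-- translation ° from λ-terms to Λ-terms -/
def parlm : Tm → Tm
  | var x => var x
  | lam x t => lam x (parlm t)
  | esub x t u => esub x (parlm t) (parlm u)
  | app (lam x v) u => esub x (parlm v) (parlm u)
  | app (var x) u => app (var x) (parlm u)
  | app (app a b) u => app (parlm (app a b)) (parlm u)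
  | app (esub y a b) u => app (parlm (esub y a b)) (parlm u)

/-- unfolding ⌊·⌋ from Λ-terms to λ-terms -/
def unf : Tm → Tm
  | var x => var x
  | app t u => app (unf t) (unf u)
  | lam x t => lam x (unf t)
  | esub x t u => app (lam x (unf t)) (unf u)

end Tm

/-! # Λ-metaterms -/

inductive MTm : Type
  | var : ℕ → MTm
  | mvar : Finset ℕ → MTm
  | app : MTm → MTm → MTm
  | lam : ℕ → MTm → MTm
  | esub : ℕ → MTm → MTm → MTm

namespace MTm

def fv : MTm → Finset ℕ
  | var x => {x}
  | mvar Δ => Δ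
  | app t u => fv t ∪ fv u
  | lam x t => fv t \ {x}
  | esub x t u => (fv t \ {x}) ∪ fv u

/-- replacement of exactly one free occurrence of the variable x by u -/
inductive MRepl (x : ℕ) (u : MTm) : MTm → MTm → Prop
  | var : MRepl x u (var x) u
  | appL {t t' s} : MRepl x u t t' → MRepl x u (app t s) (app t' s)
  | appR {t s s'} : MRepl x u s s' → MRepl x u (app t s) (app t s')
  | lam {y t t'} : y ≠ x → y ∉ fv u → MRepl x u t t' → MRepl x u (lam y t) (lam y t')
  | esubL {y t t' s} : y ≠ x → y ∉ fv u → MRepl x u t t' → MRepl x u (esub y t s) (esub y t' s)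
  | esubR {y t s s'} : MRepl x u s s' → MRepl x u (esub y t s) (esub y t s')

/-- `MReplX x Δ u b t t'` : `t'` is obtained from `t` by replacing one occurrence of the
metavariable `X_Δ` by `X_Δ[x/u]`, at a position which is *not* on the left spine of
substitutions starting from the attached substitution (flag `b = true` means the current
position is still on that spine, where attaching is forbidden). -/
inductive MReplX (x : ℕ) (Δ : Finset ℕ) (u : MTm) : Bool → MTm → MTm → Prop
  | mvar : MReplX x Δ u false (mvar Δ) (esub x (mvar Δ) u)
  | appL {b t t' s} : MReplX x Δ u false t t' → MReplX x Δ u b (app t s) (app t' s)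
  | appR {b t s s'} : MReplX x Δ u false s s' → MReplX x Δ u b (app t s) (app t s')
  | lam {b y t t'} : y ≠ x → y ∉ fv u → MReplX x Δ u false t t' →
      MReplX x Δ u b (lam y t) (lam y t')
  | esubL {b y t t' s} : y ≠ x → y ∉ fv u → MReplX x Δ u b t t' →
      MReplX x Δ u b (esub y t s) (esub y t' s)
  | esubR {b y t s s'} : MReplX x Δ u false s s' → MReplX x Δ u b (esub y t s) (esub y t s')

/-- root rules of the substitution calculus `sub` on metaterms: Gc, R, R_X -/
inductive MSubRoot : MTm → MTm → Prop
  | Gc {x t u} : x ∉ fv t → MSubRoot (esub x t u) t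
  | R {x t t' u} : MRepl x u t t' → MSubRoot (esub x t u) (esub x t' u)
  | RX {x Δ t t' u} : x ∈ Δ → MReplX x Δ u true t t' → MSubRoot (esub x t u) (esub x t' u)

inductive MCtx (r : MTm → MTm → Prop) : MTm → MTm → Prop
  | root {t t'} : r t t' → MCtx r t t'
  | appL {t t' s} : MCtx r t t' → MCtx r (app t s) (app t' s)
  | appR {t s s'} : MCtx r s s' → MCtx r (app t s) (app t s')
  | lam {y t t'} : MCtx r t t' → MCtx r (lam y t) (lam y t')
  | esubL {y t t' s} : MCtx r t t' → MCtx r (esub y t s) (esub y t' s)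
  | esubR {y t s s'} : MCtx r s s' → MCtx r (esub y t s) (esub y t s')

/-- one-step sub-reduction on metaterms -/
def MSubStep : MTm → MTm → Prop := MCtx MSubRoot

/-- the commutation equivalence =_C of independent substitutions -/
inductive MCEq : MTm → MTm → Prop
  | comm {x y t u v} : x ≠ y → y ∉ fv u → x ∉ fv v →
      MCEq (esub y (esub x t u) v) (esub x (esub y t v) u)
  | refl (t) : MCEq t t
  | symm {t t'} : MCEq t t' → MCEq t' t
  | trans {t t' t''} : MCEq t t' → MCEq t' t'' → MCEq t t''
  | appL {t t' s} : MCEq t t' → MCEq (app t s) (app t' s)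
  | appR {t s s'} : MCEq s s' → MCEq (app t s) (app t s')
  | lam {y t t'} : MCEq t t' → MCEq (lam y t) (lam y t')
  | esubL {y t t' s} : MCEq t t' → MCEq (esub y t s) (esub y t' s)
  | esubR {y t s s'} : MCEq s s' → MCEq (esub y t s) (esub y t s')

/-- `spineMem y t = true` iff `t` is of the form `X_Δ[x₁/u₁]…[xₙ/uₙ]` with `y ∈ Δ`. -/
def spineMem (y : ℕ) : MTm → Bool
  | mvar Δ => decide (y ∈ Δ)
  | esub _ t _ => spineMem y t
  | _ => false

/-- the occurrence-counting measure m -/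
def m : MTm → ℕ → ℕ
  | var y, x => if y = x then 1 else 0
  | mvar Δ, x => if x ∈ Δ then 1 else 0
  | app t u, x => m t x + m u x
  | lam _ t, x => m t x
  | esub y t u, x =>
      if spineMem y t then m t x + m t y * m u x
      else m t x + m u x + m t y * m u x

/-- the size measure s -/
def s : MTm → ℕ
  | var _ => 1
  | mvar Δ => Δ.card
  | app t u => s t + s u
  | lam _ t => s t
  | esub x t u =>
      if spineMem x t then s t - 1 + m t x * s u
      else s t + s u + m t x * s u

/-- implicit (capture-avoiding) substitution on metaterms; on a metavariable containing
`x` it attaches an explicit substitution -/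
def msubst (x : ℕ) (v : MTm) : MTm → MTm
  | var y => if y = x then v else var y
  | mvar Δ => if x ∈ Δ then esub x (mvar Δ) v else mvar Δ
  | app t u => app (msubst x v t) (msubst x v u)
  | lam y t => lam y (msubst x v t)
  | esub y t u => esub y (msubst x v t) (msubst x v u)

/-- normal form for a relation -/
def NF (r : MTm → MTm → Prop) (t : MTm) : Prop := ∀ u, ¬ r t u

end MTm

/-! # Types -/

inductive Ty : Type
  | base : ℕ → Ty
  | arrow : Ty → Ty → Ty
  | inter : Ty → Ty → Ty
  deriving DecidableEq

namespace Ty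

/-- the preorder ≪ on intersection types -/
inductive Le : Ty → Ty → Prop
  | refl (A) : Le A A
  | interL {A B} : Le (inter A B) A
  | interR {A B} : Le (inter A B) B
  | trans {A B C} : Le A B → Le B C → Le A C
  | pair {A B C} : Le A B → Le A C → Le A (inter B C)

/-- a type which is not an intersection -/
def IsInterFree : Ty → Prop
  | inter _ _ => False
  | _ => True

/-- A₁ ∩ … ∩ Aₙ -/
def bigInter (A : Ty) (l : List Ty) : Ty := l.foldl inter A

end Ty

abbrev Env := ℕ → Option Ty

/-- environment update Γ, x:A -/
def Env.upd (Γ : Env) (x : ℕ) (A : Ty) : Env := fun y => if y = x then some A else Γ y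

/-- the additive intersection type system add^i for Λ-terms -/
inductive Der : Env → Tm → Ty → Prop
  | ax {Γ x A} : Γ x = some A → Der Γ (Tm.var x) A
  | app {Γ t u A B} : Der Γ t (Ty.arrow A B) → Der Γ u A → Der Γ (Tm.app t u) B
  | abs {Γ x t A B} : Der (Γ.upd x A) t B → Der Γ (Tm.lam x t) (Ty.arrow A B)
  | subs {Γ x t u A B} : Der Γ u B → Der (Γ.upd x B) t A → Der Γ (Tm.esub x t u) A
  | interI {Γ t A B} : Der Γ t A → Der Γ t B → Der Γ t (Ty.inter A B)
  | interE1 {Γ t A B} : Der Γ t (Ty.inter A B) → Der Γ t A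
  | interE2 {Γ t A B} : Der Γ t (Ty.inter A B) → Der Γ t B

/-! # Simple types -/

inductive STy : Type
  | base : ℕ → STy
  | arrow : STy → STy → STy
  deriving DecidableEq

abbrev SEnv := ℕ → Option STy

def SEnv.upd (Γ : SEnv) (x : ℕ) (A : STy) : SEnv := fun y => if y = x then some A else Γ y

/-- the additive simple type system for λ-terms -/
inductive SDer : SEnv → Tm → STy → Prop
  | ax {Γ x A} : Γ x = some A → SDer Γ (Tm.var x) A
  | app {Γ t u A B} : SDer Γ t (STy.arrow A B) → SDer Γ u A → SDer Γ (Tm.app t u) B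
  | abs {Γ x t A B} : SDer (Γ.upd x A) t B → SDer Γ (Tm.lam x t) (STy.arrow A B)

/-! The unfolding turns every explicit substitution `t[x/u]` into the redex `(λx.⌊t⌋) ⌊u⌋`.
Hence a B-step `(λx.t) u → t[x/u]` is invisible after unfolding, while Gc becomes BGc and R
becomes β_p on that redex. Since `⌊·⌋` is compositional, every sub-step unfolds to exactly one
λpar-step. -/

namespace Tm

@[simp]
theorem fv_unf (t : Tm) : fv (unf t) = fv t := by
  induction t with
  | var x => rfl
  | app t u iht ihu => simp [unf, fv, iht, ihu]
  | lam x t ih => simp [unf, fv, ih]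
  | esub x t u iht ihu => simp [unf, fv, iht, ihu]

theorem Repl.unf {x : ℕ} {u t t' : Tm} (h : Repl x u t t') :
    Repl x (unf u) (unf t) (unf t') := by
  induction h with
  | var => exact .var
  | appL _ ih => exact .appL ih
  | appR _ ih => exact .appR ih
  | lam hne hfv _ ih => exact .lam hne (by rwa [fv_unf]) ih
  | esubL hne hfv _ ih => exact .appL (.lam hne (by rwa [fv_unf]) ih)
  | esubR _ ih => exact .appR ih

theorem Ctx.unf_eq {r : Tm → Tm → Prop} (hr : ∀ a b, r a b → unf a = unf b) {t t' : Tm}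
    (h : Ctx r t t') : unf t = unf t' := by
  induction h with
  | root hab => exact hr _ _ hab
  | appL _ ih | appR _ ih | lam _ ih | esubL _ ih | esubR _ ih => simp only [unf, ih]

theorem Ctx.unf {r r' : Tm → Tm → Prop} (hr : ∀ a b, r a b → r' (unf a) (unf b)) {t t' : Tm}
    (h : Ctx r t t') : Ctx r' (unf t) (unf t') := by
  induction h with
  | root hab => exact .root (hr _ _ hab)
  | appL _ ih => exact .appL ih
  | appR _ ih => exact .appR ih
  | lam _ ih => exact .lam ih
  | esubL _ ih => exact .appL (.lam ih)
  | esubR _ ih => exact .appR ih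

theorem BRoot.unf_eq {t t' : Tm} (h : BRoot t t') : unf t = unf t' := by
  cases h
  rfl

theorem SubRoot.unf {t t' : Tm} (h : SubRoot t t') : LparRoot (unf t) (unf t') := by
  cases h with
  | Gc hx => exact .BGc (by rwa [fv_unf])
  | R hr => exact .betaP hr.unf

theorem BStep.unf_eq {t t' : Tm} (h : BStep t t') : unf t = unf t' :=
  Ctx.unf_eq (fun _ _ => BRoot.unf_eq) h

theorem SubStep.unf {t t' : Tm} (h : SubStep t t') : LparStep (unf t) (unf t') :=
  Ctx.unf (fun _ _ => SubRoot.unf) h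

end Tm

/-- the unfolding maps B-steps to equalities and sub-steps to
non-empty λpar-sequences -/
theorem unf_projection (t t' : Tm) :
    (Tm.BStep t t' → Tm.unf t = Tm.unf t') ∧
    (Tm.SubStep t t' → Relation.TransGen Tm.LparStep (Tm.unf t) (Tm.unf t')) :=
  ⟨Tm.BStep.unf_eq, fun h => .single h.unf⟩
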